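/- Let V₆ be the space of complex homogeneous polynomials of degree 6 in z₀, z₁ with the SU(2)-action (ρ₆(g)f)(z) = f(z·g), and let K̃_{[a]} ⊂ SU(2) be the order-24 subgroup generated by the order-8 quaternion group K̃₀ and B = [[(1+i)/2, (1+i)/2], [(−1+i)/2, (1−i)/2]]. Then the fixed subspace (V₆)^{K̃_{[a]}} is one-dimensional, spanned by w′₁ = (1/2)(v₁ − v₅) where v_k = z₀^{6−k} z₁^{k} / √(k!(6−k)!). -/

import Mathlib

open MvPolynomial

/-- The action of a `2×2` complex matrix `g` on polynomials in `z₀, z₁` given by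
`(ρ(g) f)(z) = f(z·g)`. -/
noncomputable def actPoly (g : Matrix (Fin 2) (Fin 2) ℂ) (f : MvPolynomial (Fin 2) ℂ) :
    MvPolynomial (Fin 2) ℂ :=
  MvPolynomial.aeval (fun k : Fin 2 => ∑ i : Fin 2, MvPolynomial.C (g i k) * X i) f

/-- The quaternion group of order `8` in `SU(2)`. -/
noncomputable def Q8 : Set (Matrix (Fin 2) (Fin 2) ℂ) :=
  {1, -1, !![0, -1; 1, 0], -(!![0, -1; 1, 0]),
   !![Complex.I, 0; 0, -Complex.I], -(!![Complex.I, 0; 0, -Complex.I]),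
   !![0, Complex.I; Complex.I, 0], -(!![0, Complex.I; Complex.I, 0])}

/-- The extra generator `B` of the order-24 group `K̃_{[a]}`. -/
noncomputable def Bmat : Matrix (Fin 2) (Fin 2) ℂ :=
  !![(1 + Complex.I) / 2, (1 + Complex.I) / 2;
     (-1 + Complex.I) / 2, (1 - Complex.I) / 2]

/-- `w′₁ = (1/2)(v₁ − v₅)` where `v_k = z₀^{6−k} z₁^k / √(k!(6−k)!)`. -/
noncomputable def w1' : MvPolynomial (Fin 2) ℂ :=
  ((1 / 2 : ℂ) * ((Real.sqrt 120 : ℝ) : ℂ)⁻¹) • (X 0 ^ 5 * X 1 - X 0 * X 1 ^ 5)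

/-!
In degree 6, the element `diag(i, -i)` of `K̃₀` multiplies `z₀ᵃz₁ᵇ` by `iᵃ(-i)ᵇ = -(-1)ᵇ`, so an
invariant has only monomials with `b` odd; the element `[[0,-1],[1,0]]` sends `z₀ᵃz₁ᵇ` to
`(-1)ᵇ z₀ᵇz₁ᵃ`, which kills `z₀³z₁³` and makes the coefficients of `z₀z₁⁵` and `z₀⁵z₁` opposite.
So already the `K̃₀`-invariants are the multiples of `z₀⁵z₁ - z₀z₁⁵`, and this sextic is checked
directly to be fixed by `K̃₀` and `B`.
-/

open Complex

section MonomialMatrix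

variable {σ τ R : Type*} [CommSemiring R]

theorem aeval_C_mul_X_monomial (t : σ → R) (u : σ →₀ ℕ) (a : R) :
    aeval (fun k => C (t k) * X k) (monomial u a)
      = monomial u (a * u.prod fun k n => t k ^ n) := by
  rw [aeval_monomial, monomial_eq]
  simp only [mul_pow, Finsupp.prod_mul, ← map_pow, algebraMap_eq]
  rw [← map_finsuppProd, C_mul]
  ring

theorem coeff_aeval_C_mul_X (t : σ → R) (f : MvPolynomial σ R) (d : σ →₀ ℕ) :
    coeff d (aeval (fun k => C (t k) * X k) f) = (d.prod fun k n => t k ^ n) * coeff d f := by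
  classical
  induction f using MvPolynomial.induction_on' with
  | monomial u a =>
    rw [aeval_C_mul_X_monomial, coeff_monomial, coeff_monomial]
    split_ifs with h
    · subst h; ring
    · simp
  | add p q hp hq => simp only [map_add, coeff_add, hp, hq, mul_add]

theorem coeff_mapDomain_aeval_C_mul_X {e : σ → τ} (he : Function.Injective e) (t : σ → R)
    (f : MvPolynomial σ R) (d : σ →₀ ℕ) :
    coeff (d.mapDomain e) (aeval (fun k => C (t k) * X (e k)) f)
      = (d.prod fun k n => t k ^ n) * coeff d f := by
  have hrename : aeval (fun k => C (t k) * X (e k)) f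
      = rename e (aeval (fun k => C (t k) * X k) f) := by
    rw [← AlgHom.comp_apply, comp_aeval]
    simp
  rw [hrename, coeff_rename_mapDomain e he, coeff_aeval_C_mul_X]

end MonomialMatrix

noncomputable def bideg (a b : ℕ) : Fin 2 →₀ ℕ := Finsupp.single 0 a + Finsupp.single 1 b

@[simp] theorem bideg_apply_zero (a b : ℕ) : bideg a b 0 = a := by simp [bideg]

@[simp] theorem bideg_apply_one (a b : ℕ) : bideg a b 1 = b := by simp [bideg]

theorem bideg_inj {a b a' b' : ℕ} : bideg a b = bideg a' b' ↔ a = a' ∧ b = b' := by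
  refine ⟨fun h => ⟨by simpa using congr($h 0), by simpa using congr($h 1)⟩, ?_⟩
  rintro ⟨rfl, rfl⟩
  rfl

theorem eq_bideg (d : Fin 2 →₀ ℕ) : d = bideg (d 0) (d 1) := by
  ext i
  fin_cases i <;> simp

theorem degree_bideg (a b : ℕ) : (bideg a b).degree = a + b := by
  rw [Finsupp.degree_eq_sum, Fin.sum_univ_two, bideg_apply_zero, bideg_apply_one]

theorem prod_pow_bideg {M : Type*} [CommMonoid M] (t : Fin 2 → M) (a b : ℕ) :
    ((bideg a b).prod fun k n => t k ^ n) = t 0 ^ a * t 1 ^ b := by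
  rw [Finsupp.prod_fintype _ _ fun _ => pow_zero _, Fin.prod_univ_two, bideg_apply_zero,
    bideg_apply_one]

theorem mapDomain_swap_bideg (a b : ℕ) :
    (bideg a b).mapDomain (Equiv.swap 0 1) = bideg b a := by
  simp [bideg, Finsupp.mapDomain_add, Finsupp.mapDomain_single, add_comm]

theorem X_pow_mul_X_pow {R : Type*} [CommSemiring R] (a b : ℕ) :
    (X 0 ^ a * X 1 ^ b : MvPolynomial (Fin 2) R) = monomial (bideg a b) 1 := by
  rw [X_pow_eq_monomial, X_pow_eq_monomial, monomial_mul, one_mul, bideg]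

theorem actPoly_smul (g : Matrix (Fin 2) (Fin 2) ℂ) (c : ℂ) (f : MvPolynomial (Fin 2) ℂ) :
    actPoly g (c • f) = c • actPoly g f :=
  map_smul _ c f

theorem coeff_bideg_actPoly_diag_I (f : MvPolynomial (Fin 2) ℂ) (a b : ℕ) :
    coeff (bideg a b) (actPoly !![I, 0; 0, -I] f) = I ^ a * (-I) ^ b * coeff (bideg a b) f := by
  have hdiag : actPoly !![I, 0; 0, -I] f = aeval (fun k => C (![I, -I] k) * X k) f := by
    unfold actPoly
    congr
    funext k
    fin_cases k <;> simp [Fin.sum_univ_two]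
  rw [hdiag, coeff_aeval_C_mul_X, prod_pow_bideg]
  rfl

theorem coeff_swap_bideg_actPoly_rot (f : MvPolynomial (Fin 2) ℂ) (a b : ℕ) :
    coeff (bideg b a) (actPoly !![0, -1; 1, 0] f) = (-1) ^ b * coeff (bideg a b) f := by
  have hrot : actPoly !![0, -1; 1, 0] f
      = aeval (fun k => C (![1, -1] k) * X (Equiv.swap 0 1 k)) f := by
    unfold actPoly
    congr
    funext k
    fin_cases k <;> simp [Fin.sum_univ_two]
  rw [hrot, ← mapDomain_swap_bideg, coeff_mapDomain_aeval_C_mul_X (Equiv.injective _),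
    prod_pow_bideg]
  simp

/-- `z₀z₁(z₀⁴ - z₁⁴)`, whose zeros `0, ∞, ±1, ±i` on `ℙ¹` are the vertices of an octahedron. -/
noncomputable def sextic : MvPolynomial (Fin 2) ℂ := X 0 ^ 5 * X 1 - X 0 * X 1 ^ 5

theorem sextic_eq_monomial_sub_monomial :
    sextic = monomial (bideg 5 1) 1 - monomial (bideg 1 5) 1 := by
  rw [← X_pow_mul_X_pow, ← X_pow_mul_X_pow, pow_one, pow_one, sextic]

theorem isHomogeneous_sextic : sextic.IsHomogeneous 6 := by
  rw [sextic_eq_monomial_sub_monomial]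
  exact (isHomogeneous_monomial _ (degree_bideg 5 1)).sub
    (isHomogeneous_monomial _ (degree_bideg 1 5))

theorem coeff_bideg_sextic (a b : ℕ) :
    coeff (bideg a b) sextic
      = (if a = 5 ∧ b = 1 then 1 else 0) - (if a = 1 ∧ b = 5 then 1 else 0) := by
  rw [sextic_eq_monomial_sub_monomial, coeff_sub, coeff_monomial, coeff_monomial]
  simp only [bideg_inj, eq_comm]

theorem actPoly_sextic_of_mem_Q8 {g : Matrix (Fin 2) (Fin 2) ℂ} (hg : g ∈ Q8) :
    actPoly g sextic = sextic := by
  apply MvPolynomial.funext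
  intro x
  rcases hg with rfl | rfl | rfl | rfl | rfl | rfl | rfl | rfl <;>
    simp [actPoly, sextic, Fin.sum_univ_two] <;> grind [I_sq]

theorem actPoly_Bmat_sextic : actPoly Bmat sextic = sextic := by
  apply MvPolynomial.funext
  intro x
  simp [actPoly, Bmat, sextic, Fin.sum_univ_two]
  grind [I_sq]

theorem eq_coeff_smul_sextic_of_fixed {f : MvPolynomial (Fin 2) ℂ} (hf : f.IsHomogeneous 6)
    (hQ : ∀ g ∈ Q8, actPoly g f = f) : f = coeff (bideg 5 1) f • sextic := by
  have hD (a b : ℕ) : I ^ a * (-I) ^ b * coeff (bideg a b) f = coeff (bideg a b) f := by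
    rw [← coeff_bideg_actPoly_diag_I, hQ _ (by simp [Q8])]
  have hJ (a b : ℕ) : (-1) ^ b * coeff (bideg a b) f = coeff (bideg b a) f := by
    rw [← coeff_swap_bideg_actPoly_rot, hQ _ (by simp [Q8])]
  have h_even {a b : ℕ} (hab : a + b = 6) (hb : Even b) : coeff (bideg a b) f = 0 := by
    have hI : I ^ a * (-I) ^ b = -1 := by
      rw [neg_pow, hb.neg_one_pow, one_mul, ← pow_add, hab, I_pow_eq_pow_mod]
      norm_num
    have h := hD a b
    rw [hI] at h
    linear_combination (-1 / 2 : ℂ) * h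
  ext d
  obtain ⟨a, b, rfl⟩ : ∃ a b, d = bideg a b := ⟨_, _, eq_bideg d⟩
  rw [coeff_smul, smul_eq_mul, coeff_bideg_sextic]
  by_cases hab : a + b = 6
  · rcases Nat.even_or_odd b with hb | ⟨k, hk⟩
    · rw [h_even hab hb, if_neg (by grind), if_neg (by grind)]
      ring
    · obtain ⟨rfl, rfl⟩ | ⟨rfl, rfl⟩ | ⟨rfl, rfl⟩ :
          a = 5 ∧ b = 1 ∨ a = 3 ∧ b = 3 ∨ a = 1 ∧ b = 5 := by omega
      · norm_num
      · norm_num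
        linear_combination (-1 / 2 : ℂ) * hJ 3 3
      · norm_num
        linear_combination -hJ 5 1
  · rw [hf.coeff_eq_zero (by rwa [degree_bideg]), if_neg (by omega), if_neg (by omega)]
    ring

theorem exists_eq_smul_w1'_iff {f : MvPolynomial (Fin 2) ℂ} :
    (∃ c : ℂ, f = c • w1') ↔ ∃ c : ℂ, f = c • sextic := by
  have hs : (1 / 2 : ℂ) * ((Real.sqrt 120 : ℝ) : ℂ)⁻¹ ≠ 0 := by simp
  have hw : w1' = ((1 / 2 : ℂ) * ((Real.sqrt 120 : ℝ) : ℂ)⁻¹) • sextic := rfl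
  simp only [hw, smul_smul]
  exact ⟨fun ⟨c, hc⟩ => ⟨_, hc⟩, fun ⟨c, hc⟩ => ⟨c / _, by rwa [div_mul_cancel₀ _ hs]⟩⟩

/-- the subspace of `V₆` fixed by the order-24 group generated by the
quaternion group `K̃₀` and `B` is one-dimensional, spanned by `w′₁`. -/
theorem stmt12 :
    {f : MvPolynomial (Fin 2) ℂ | f.IsHomogeneous 6 ∧
        (∀ g ∈ Q8, actPoly g f = f) ∧ actPoly Bmat f = f}
      = {f : MvPolynomial (Fin 2) ℂ | ∃ c : ℂ, f = c • w1'} := by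
  ext f
  simp only [Set.mem_ofPred_eq, exists_eq_smul_w1'_iff]
  constructor
  · rintro ⟨hf, hQ, -⟩
    exact ⟨_, eq_coeff_smul_sextic_of_fixed hf hQ⟩
  · rintro ⟨c, rfl⟩
    refine ⟨?_, fun g hg => ?_, ?_⟩
    · rw [smul_eq_C_mul]
      exact isHomogeneous_sextic.C_mul c
    · rw [actPoly_smul, actPoly_sextic_of_mem_Q8 hg]
    · rw [actPoly_smul, actPoly_Bmat_sextic]
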